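/- arXiv:2307.05875 — 2 statements merged into one kernel-verified Lean document; each statement's English description precedes it below -/
import Mathlib

section
/- If f : [a,b] → ℝ is a convex function on a nontrivial interval [a,b] (a < b), then (1/(b-a)) ∫_a^b f(x) dx ≤ (f(a) + f(b))/2. -/
open MeasureTheory intervalIntegral

noncomputable def chord (f : ℝ → ℝ) (a b x : ℝ) : ℝ :=
  ((b - x) * f a + (x - a) * f b) / (b - a)

theorem continuous_chord (f : ℝ → ℝ) (a b : ℝ) : Continuous (chord f a b) := by
  unfold chord
  fun_prop

theorem ConvexOn.le_chord {a b x : ℝ} {f : ℝ → ℝ} (hf : ConvexOn ℝ (Set.Icc a b) f)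
    (hab : a < b) (hx : x ∈ Set.Icc a b) : f x ≤ chord f a b x := by
  have hba : 0 < b - a := sub_pos.2 hab
  have hx_comb : ((b - x) / (b - a)) • a + ((x - a) / (b - a)) • b = x := by
    simp only [smul_eq_mul]
    field_simp
    ring
  calc f x = f (((b - x) / (b - a)) • a + ((x - a) / (b - a)) • b) := by rw [hx_comb]
    _ ≤ ((b - x) / (b - a)) • f a + ((x - a) / (b - a)) • f b :=
      hf.2 (Set.left_mem_Icc.2 hab.le) (Set.right_mem_Icc.2 hab.le)
        (div_nonneg (by linarith [hx.2]) hba.le) (div_nonneg (by linarith [hx.1]) hba.le)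
        (by field_simp; ring)
    _ = chord f a b x := by
      simp only [smul_eq_mul, chord]
      ring

theorem integral_chord (f : ℝ → ℝ) {a b : ℝ} (hab : a ≠ b) :
    ∫ x in a..b, chord f a b x = (b - a) * (f a + f b) / 2 := by
  have hba : b - a ≠ 0 := sub_ne_zero.2 hab.symm
  have h_affine :
      chord f a b = fun x => x * ((f b - f a) / (b - a)) + (b * f a - a * f b) / (b - a) := by
    ext x
    simp only [chord]
    field_simp
    ring
  rw [h_affine, intervalIntegral.integral_add (intervalIntegrable_id.mul_const _)
    intervalIntegrable_const, intervalIntegral.integral_mul_const, integral_id,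
    intervalIntegral.integral_const, smul_eq_mul]
  field_simp
  ring

/-- Hermite–Hadamard, right-hand side: the average of a convex function on `[a,b]`
is at most the average of its boundary values. -/
theorem hermite_hadamard_right (a b : ℝ) (hab : a < b) (f : ℝ → ℝ)
    (hf : ConvexOn ℝ (Set.Icc a b) f)
    (hint : IntervalIntegrable f volume a b) :
    (1 / (b - a)) * ∫ x in a..b, f x ≤ (f a + f b) / 2 := by
  have h_mono : ∫ x in a..b, f x ≤ ∫ x in a..b, chord f a b x :=
    integral_mono_on hab.le hint ((continuous_chord f a b).intervalIntegrable a b)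
      fun x hx => hf.le_chord hab hx
  rw [integral_chord f hab.ne] at h_mono
  rw [one_div_mul_eq_div, div_le_iff₀ (sub_pos.2 hab)]
  linarith
end

section
/- Let Ω = [a₁,b₁] × ⋯ × [a_d,b_d] ⊆ ℝ^d (d ≥ 2) be a box with aᵢ < bᵢ for all i. Then for every convex function f : Ω → ℝ, (1/|Ω|)∫_Ω f dV ≤ (1/|∂Ω|)∫_{∂Ω} f dσ. -/
/-!
Hermite–Hadamard on every segment parallel to the `i`-th axis, integrated over the projection
`Fᵢ` of the box along that axis, gives `∫_Ω f ≤ (bᵢ - aᵢ) / 2 · (∫ f over the two facets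
orthogonal to eᵢ)`. Multiplying by `|Fᵢ|` turns `(bᵢ - aᵢ) |Fᵢ|` into `|Ω|`, and summing over `i`
gives `|∂Ω| ∫_Ω f ≤ |Ω| ∫_∂Ω f`. On `∂Ω` the Hausdorff measure is a constant multiple of
Lebesgue measure on the facets, and the constant cancels in the boundary average.
-/

open Function MeasureTheory Set
open scoped NNReal ENNReal

theorem ConvexOn.le_chord_s11 {g : ℝ → ℝ} {p q t : ℝ} (hg : ConvexOn ℝ (Icc p q) g) (hpq : p < q)
    (ht : t ∈ Icc p q) : g t ≤ ((q - t) * g p + (t - p) * g q) / (q - p) := by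
  have hqp : 0 < q - p := sub_pos.2 hpq
  have h := hg.2 (left_mem_Icc.2 hpq.le) (right_mem_Icc.2 hpq.le)
    (div_nonneg (sub_nonneg.2 ht.2) hqp.le) (div_nonneg (sub_nonneg.2 ht.1) hqp.le)
    (by field_simp; ring)
  calc g t = g (((q - t) / (q - p)) • p + ((t - p) / (q - p)) • q) := by
        congr 1; simp only [smul_eq_mul]; field_simp; ring
    _ ≤ _ := h
    _ = _ := by simp only [smul_eq_mul]; ring

theorem ConvexOn.setIntegral_Icc_le_mul_add_div_two {g : ℝ → ℝ} {p q : ℝ} (hpq : p < q)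
    (hg : ConvexOn ℝ (Icc p q) g) (hint : IntegrableOn g (Icc p q)) :
    ∫ t in Icc p q, g t ≤ (q - p) * (g p + g q) / 2 := by
  calc ∫ t in Icc p q, g t
      ≤ ∫ t in Icc p q, ((q - t) * g p + (t - p) * g q) / (q - p) :=
        setIntegral_mono_on hint (Continuous.integrableOn_Icc (by fun_prop)) measurableSet_Icc
          fun t ht => hg.le_chord_s11 hpq ht
    _ = (q - p) * (g p + g q) / 2 := by
      rw [integral_Icc_eq_integral_Ioc, ← intervalIntegral.integral_of_le hpq.le,
        intervalIntegral.integral_div,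
        intervalIntegral.integral_add (Continuous.intervalIntegrable (by fun_prop) _ _)
          (Continuous.intervalIntegrable (by fun_prop) _ _),
        intervalIntegral.integral_mul_const, intervalIntegral.integral_mul_const,
        intervalIntegral.integral_comp_sub_left (fun t => t),
        intervalIntegral.integral_comp_sub_right (fun t => t), integral_id, integral_id]
      field_simp [(sub_pos.2 hpq).ne']
      ring

theorem MeasureTheory.average_smul_measure {α E : Type*} [MeasurableSpace α]
    [NormedAddCommGroup E] [NormedSpace ℝ E] (μ : Measure α) {c : ℝ≥0} (hc : c ≠ 0) (f : α → E) :
    ⨍ x, f x ∂(c • μ) = ⨍ x, f x ∂μ := by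
  simp only [average_eq, integral_smul_nnreal_measure, measureReal_nnreal_smul_apply, mul_inv,
    NNReal.smul_def, smul_smul]
  congr 1
  field_simp

theorem Isometry.hausdorffMeasure_restrict_image {X Y : Type*} [EMetricSpace X] [CompleteSpace X]
    [MeasurableSpace X] [BorelSpace X] [EMetricSpace Y] [MeasurableSpace Y] [BorelSpace Y]
    {f : X → Y} (hf : Isometry f) {d : ℝ} (hd : 0 ≤ d) (s : Set X) :
    (μH[d] : Measure Y).restrict (f '' s) = (μH[d].restrict s).map f := by
  have hemb := hf.isClosedEmbedding.measurableEmbedding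
  rw [← Measure.restrict_restrict_of_subset (image_subset_range f s),
    ← hf.map_hausdorffMeasure (Or.inl hd), hemb.restrict_map, hf.injective.preimage_image]

namespace EuclideanSpace

section Box

variable {ι : Type*}

def box (a b : ι → ℝ) : Set (EuclideanSpace ℝ ι) :=
  {x | ∀ j, x j ∈ Icc (a j) (b j)}

variable (a b : ι → ℝ)

theorem box_eq_preimage : box a b = WithLp.ofLp ⁻¹' Icc a b := by
  ext x; simp [box, Pi.le_def, forall_and]

theorem isClosed_box : IsClosed (box a b) := by
  rw [box_eq_preimage]
  exact isClosed_Icc.preimage (PiLp.continuous_ofLp 2 _)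

variable [Fintype ι]

theorem measurableSet_box : MeasurableSet (box a b) :=
  (isClosed_box a b).measurableSet

theorem volume_box : volume (box a b) = ∏ j, ENNReal.ofReal (b j - a j) := by
  rw [box_eq_preimage, (PiLp.volume_preserving_ofLp ι).measure_preimage
    measurableSet_Icc.nullMeasurableSet, Real.volume_Icc_pi]

theorem volume_real_box {a b : ι → ℝ} (hab : a ≤ b) :
    volume.real (box a b) = ∏ j, (b j - a j) := by
  simp [measureReal_def, volume_box, ENNReal.toReal_prod, fun j => sub_nonneg.2 (hab j)]

theorem interior_box : interior (box a b) = {x | ∀ j, x j ∈ Ioo (a j) (b j)} := by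
  rw [box_eq_preimage, ← pi_univ_Icc]
  change interior (PiLp.homeomorph 2 _ ⁻¹' _) = _
  rw [← Homeomorph.preimage_interior, interior_pi_set finite_univ]
  ext x; simp [PiLp.homeomorph]

theorem frontier_box : frontier (box a b) = {x ∈ box a b | ∃ j, x j = a j ∨ x j = b j} := by
  rw [(isClosed_box a b).frontier_eq, interior_box]
  ext x
  simp only [box, mem_sdiff, mem_ofPred_eq, not_forall]
  refine and_congr_right fun hx => exists_congr fun j => ?_
  grind

theorem volume_setOf_apply_eq (k : ι) (c : ℝ) :
    volume {y : EuclideanSpace ℝ ι | y k = c} = 0 := by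
  change volume (WithLp.ofLp ⁻¹' {y : ι → ℝ | y k = c}) = 0
  rw [(PiLp.volume_preserving_ofLp ι).measure_preimage
    (measurableSet_eq_fun (measurable_pi_apply k) measurable_const).nullMeasurableSet]
  exact Measure.pi_hyperplane (fun _ : ι => (volume : Measure ℝ)) k c

end Box

section InsertNth

variable {n : ℕ}

def insertNth (i : Fin (n + 1)) (t : ℝ) (y : EuclideanSpace ℝ (Fin n)) :
    EuclideanSpace ℝ (Fin (n + 1)) :=
  WithLp.toLp 2 (Fin.insertNth i t y.ofLp)

@[simp]
theorem insertNth_apply_same (i : Fin (n + 1)) (t : ℝ) (y : EuclideanSpace ℝ (Fin n)) :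
    insertNth i t y i = t := by
  simp [insertNth]

@[simp]
theorem insertNth_apply_succAbove (i : Fin (n + 1)) (t : ℝ) (y : EuclideanSpace ℝ (Fin n))
    (k : Fin n) : insertNth i t y (i.succAbove k) = y k := by
  simp [insertNth]

theorem isometry_insertNth (i : Fin (n + 1)) (t : ℝ) : Isometry (insertNth i t) := by
  intro y z
  simp only [EuclideanSpace.edist_eq, Fin.sum_univ_succAbove _ i, insertNth_apply_same,
    insertNth_apply_succAbove, edist_self]
  simp

theorem measurableEmbedding_insertNth (i : Fin (n + 1)) (t : ℝ) :
    MeasurableEmbedding (insertNth i t) :=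
  (isometry_insertNth i t).isClosedEmbedding.measurableEmbedding

theorem lineMap_insertNth (i : Fin (n + 1)) (y : EuclideanSpace ℝ (Fin n)) (t : ℝ) :
    AffineMap.lineMap (insertNth i 0 y) (insertNth i 1 y) t = insertNth i t y := by
  ext j
  induction j using Fin.succAboveCases i <;> simp [AffineMap.lineMap_apply_module, ← add_mul]

theorem insertNth_mem_box_iff {a b : Fin (n + 1) → ℝ} {i : Fin (n + 1)} {t : ℝ}
    {y : EuclideanSpace ℝ (Fin n)} :
    insertNth i t y ∈ box a b ↔
      t ∈ Icc (a i) (b i) ∧ y ∈ box (i.removeNth a) (i.removeNth b) := by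
  simp [box, Fin.forall_iff_succAbove i, Fin.removeNth]

theorem image_insertNth_box {a b : Fin (n + 1) → ℝ} {i : Fin (n + 1)} {c : ℝ}
    (hc : c ∈ Icc (a i) (b i)) :
    insertNth i c '' box (i.removeNth a) (i.removeNth b) = {x ∈ box a b | x i = c} := by
  ext x
  constructor
  · rintro ⟨y, hy, rfl⟩
    exact ⟨insertNth_mem_box_iff.2 ⟨hc, hy⟩, insertNth_apply_same i c y⟩
  · rintro ⟨hx, rfl⟩
    refine ⟨WithLp.toLp 2 (i.removeNth x.ofLp), fun k => hx (i.succAbove k), ?_⟩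
    exact congrArg (WithLp.toLp 2) (Fin.insertNth_self_removeNth i x.ofLp)

def insertNthMeasurableEquiv (i : Fin (n + 1)) :
    ℝ × EuclideanSpace ℝ (Fin n) ≃ᵐ EuclideanSpace ℝ (Fin (n + 1)) :=
  ((MeasurableEquiv.refl ℝ).prodCongr (MeasurableEquiv.toLp 2 (Fin n → ℝ)).symm).trans
    ((MeasurableEquiv.piFinSuccAbove (fun _ => ℝ) i).symm.trans (MeasurableEquiv.toLp 2 _))

theorem measurePreserving_insertNthMeasurableEquiv (i : Fin (n + 1)) :
    MeasurePreserving (insertNthMeasurableEquiv i) (volume.prod volume) volume :=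
  ((MeasurePreserving.id volume).prod (PiLp.volume_preserving_ofLp (Fin n))).trans
    (((volume_preserving_piFinSuccAbove (fun _ => ℝ) i).symm _).trans
      (PiLp.volume_preserving_toLp (Fin (n + 1))))

end InsertNth

section Slices

variable {n : ℕ} {a b : Fin (n + 1) → ℝ} {f : EuclideanSpace ℝ (Fin (n + 1)) → ℝ}

theorem _root_.ConvexOn.comp_insertNth (hf : ConvexOn ℝ (box a b) f) {i : Fin (n + 1)}
    {y : EuclideanSpace ℝ (Fin n)} (hy : y ∈ box (i.removeNth a) (i.removeNth b)) :
    ConvexOn ℝ (Icc (a i) (b i)) fun t => f (insertNth i t y) := by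
  have hpre : AffineMap.lineMap (insertNth i 0 y) (insertNth i 1 y) ⁻¹' box a b =
      Icc (a i) (b i) := by
    ext t
    simp [lineMap_insertNth, insertNth_mem_box_iff, hy]
  simpa [hpre, comp_def, lineMap_insertNth] using
    hf.comp_affineMap (AffineMap.lineMap (insertNth i 0 y) (insertNth i 1 y))

theorem measurePreserving_insertNth_restrict_box (i : Fin (n + 1)) :
    MeasurePreserving (fun p : ℝ × EuclideanSpace ℝ (Fin n) => insertNth i p.1 p.2)
      ((volume.restrict (Icc (a i) (b i))).prod
        (volume.restrict (box (i.removeNth a) (i.removeNth b))))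
      (volume.restrict (box a b)) := by
  have h := (measurePreserving_insertNthMeasurableEquiv i).restrict_preimage
    (measurableSet_box a b)
  have hpre : insertNthMeasurableEquiv i ⁻¹' box a b =
      Icc (a i) (b i) ×ˢ box (i.removeNth a) (i.removeNth b) := by
    ext ⟨t, y⟩
    exact insertNth_mem_box_iff
  rwa [hpre, ← Measure.prod_restrict] at h

theorem _root_.ConvexOn.setIntegral_box_le_mul_add_div_two (hf : ConvexOn ℝ (box a b) f)
    (hfint : IntegrableOn f (box a b)) {i : Fin (n + 1)} (hi : a i < b i)
    (ha : IntegrableOn (fun y => f (insertNth i (a i) y)) (box (i.removeNth a) (i.removeNth b)))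
    (hb : IntegrableOn (fun y => f (insertNth i (b i) y)) (box (i.removeNth a) (i.removeNth b))) :
    ∫ x in box a b, f x ≤ (b i - a i) * ((∫ y in box (i.removeNth a) (i.removeNth b),
      f (insertNth i (a i) y)) + ∫ y in box (i.removeNth a) (i.removeNth b),
        f (insertNth i (b i) y)) / 2 := by
  have hmp := measurePreserving_insertNth_restrict_box (a := a) (b := b) i
  have hI : Integrable (fun p : ℝ × EuclideanSpace ℝ (Fin n) => f (insertNth i p.1 p.2)) _ :=
    (hmp.integrable_comp_emb (insertNthMeasurableEquiv i).measurableEmbedding).2 hfint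
  rw [← hmp.integral_comp (insertNthMeasurableEquiv i).measurableEmbedding,
    integral_prod_symm _ hI]
  calc _ ≤ ∫ y in box (i.removeNth a) (i.removeNth b),
        (b i - a i) * (f (insertNth i (a i) y) + f (insertNth i (b i) y)) / 2 := by
        refine integral_mono_ae hI.integral_prod_right (((ha.add hb).const_mul _).div_const 2) ?_
        filter_upwards [hI.prod_left_ae, ae_restrict_mem (measurableSet_box _ _)]
          with y hyint hy
        exact (hf.comp_insertNth hy).setIntegral_Icc_le_mul_add_div_two hi hyint
    _ = _ := by rw [integral_div, integral_const_mul, integral_add ha hb]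

end Slices

section Boundary

variable {n : ℕ}

/- `μH` carries no normalising constant, so on Euclidean space it is a multiple of Lebesgue
measure, not equal to it. -/
theorem hausdorffMeasure_eq_smul_volume (n : ℕ) :
    ∃ c : ℝ≥0, c ≠ 0 ∧ (μH[n] : Measure (EuclideanSpace ℝ (Fin n))) = c • volume :=
  ⟨_, (Measure.addHaarScalarFactor_pos_of_isAddHaarMeasure _ _).ne',
    Measure.isAddLeftInvariant_eq_smul _ _⟩

theorem hausdorffMeasure_restrict_image_insertNth {c : ℝ≥0}
    (hc : (μH[n] : Measure (EuclideanSpace ℝ (Fin n))) = c • volume) (i : Fin (n + 1)) (t : ℝ)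
    (s : Set (EuclideanSpace ℝ (Fin n))) :
    (μH[n] : Measure (EuclideanSpace ℝ (Fin (n + 1)))).restrict (insertNth i t '' s) =
      c • (volume.restrict s).map (insertNth i t) := by
  rw [(isometry_insertNth i t).hausdorffMeasure_restrict_image n.cast_nonneg, hc,
    Measure.restrict_smul, Measure.map_smul]

theorem aedisjoint_image_insertNth {i j : Fin (n + 1)} (hij : i ≠ j) (c c' : ℝ)
    (s t : Set (EuclideanSpace ℝ (Fin n))) :
    AEDisjoint (μH[n] : Measure (EuclideanSpace ℝ (Fin (n + 1))))
      (insertNth i c '' s) (insertNth j c' '' t) := by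
  obtain ⟨k, rfl⟩ := Fin.exists_succAbove_eq hij.symm
  have hsub : insertNth i c '' s ∩ insertNth (i.succAbove k) c' '' t ⊆
      insertNth i c '' {y | y k = c'} := by
    rintro _ ⟨⟨y, -, rfl⟩, ⟨z, -, hz⟩⟩
    refine ⟨y, ?_, rfl⟩
    rw [mem_ofPred_eq, ← insertNth_apply_succAbove i c y k, ← hz, insertNth_apply_same]
  obtain ⟨_, -, hμ⟩ := hausdorffMeasure_eq_smul_volume n
  refine measure_mono_null hsub ?_
  rw [(isometry_insertNth i c).hausdorffMeasure_image (Or.inl n.cast_nonneg), hμ,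
    Measure.smul_apply, volume_setOf_apply_eq, smul_zero]

noncomputable def boxBoundaryMeasure (a b : Fin (n + 1) → ℝ) :
    Measure (EuclideanSpace ℝ (Fin (n + 1))) :=
  ∑ i, ((volume.restrict (box (i.removeNth a) (i.removeNth b))).map (insertNth i (a i)) +
    (volume.restrict (box (i.removeNth a) (i.removeNth b))).map (insertNth i (b i)))

variable {a b : Fin (n + 1) → ℝ} {f : EuclideanSpace ℝ (Fin (n + 1)) → ℝ}

theorem frontier_box_eq_iUnion (hab : a ≤ b) :
    frontier (box a b) = ⋃ i, (insertNth i (a i) '' box (i.removeNth a) (i.removeNth b) ∪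
      insertNth i (b i) '' box (i.removeNth a) (i.removeNth b)) := by
  ext x
  simp only [frontier_box, mem_iUnion, mem_union, image_insertNth_box (left_mem_Icc.2 (hab _)),
    image_insertNth_box (right_mem_Icc.2 (hab _)), mem_ofPred_eq, ← and_or_left, exists_and_left]

theorem hausdorffMeasure_restrict_frontier_box (hab : ∀ i, a i < b i) :
    ∃ c : ℝ≥0, c ≠ 0 ∧ (μH[n] : Measure (EuclideanSpace ℝ (Fin (n + 1)))).restrict
      (frontier (box a b)) = c • boxBoundaryMeasure a b := by
  obtain ⟨c, hc0, hc⟩ := hausdorffMeasure_eq_smul_volume n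
  refine ⟨c, hc0, ?_⟩
  have hmeas (i : Fin (n + 1)) (t : ℝ) :
      MeasurableSet (insertNth i t '' box (i.removeNth a) (i.removeNth b)) :=
    (measurableEmbedding_insertNth i t).measurableSet_image.2 (measurableSet_box _ _)
  have hdisj (i : Fin (n + 1)) :
      Disjoint (insertNth i (a i) '' box (i.removeNth a) (i.removeNth b))
        (insertNth i (b i) '' box (i.removeNth a) (i.removeNth b)) := by
    rw [image_insertNth_box (left_mem_Icc.2 (hab i).le),
      image_insertNth_box (right_mem_Icc.2 (hab i).le)]
    exact disjoint_left.2 fun x hxa hxb => (hab i).ne (hxa.2.symm.trans hxb.2)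
  have haedisj : Pairwise (AEDisjoint (μH[n] : Measure (EuclideanSpace ℝ (Fin (n + 1)))) on
      fun i => insertNth i (a i) '' box (i.removeNth a) (i.removeNth b) ∪
        insertNth i (b i) '' box (i.removeNth a) (i.removeNth b)) := fun i j hij =>
    have h (c c' : ℝ) := aedisjoint_image_insertNth hij c c' (box (i.removeNth a) (i.removeNth b))
      (box (j.removeNth a) (j.removeNth b))
    ((h _ _).union_right (h _ _)).union_left ((h _ _).union_right (h _ _))
  rw [frontier_box_eq_iUnion fun i => (hab i).le,
    Measure.restrict_iUnion_ae haedisj fun i => ((hmeas i _).union (hmeas i _)).nullMeasurableSet,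
    Measure.sum_fintype, boxBoundaryMeasure, Finset.smul_sum]
  refine Finset.sum_congr rfl fun i _ => ?_
  rw [Measure.restrict_union (hdisj i) (hmeas i _), smul_add,
    hausdorffMeasure_restrict_image_insertNth hc, hausdorffMeasure_restrict_image_insertNth hc]

theorem integrable_boxBoundaryMeasure_iff :
    Integrable f (boxBoundaryMeasure a b) ↔ ∀ i,
      IntegrableOn (fun y => f (insertNth i (a i) y)) (box (i.removeNth a) (i.removeNth b)) ∧
      IntegrableOn (fun y => f (insertNth i (b i) y)) (box (i.removeNth a) (i.removeNth b)) := by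
  simp [boxBoundaryMeasure, integrable_finsetSum_measure, integrable_add_measure,
    (measurableEmbedding_insertNth _ _).integrable_map_iff, IntegrableOn, comp_def]

theorem integral_boxBoundaryMeasure (hf : Integrable f (boxBoundaryMeasure a b)) :
    ∫ x, f x ∂boxBoundaryMeasure a b = ∑ i, ((∫ y in box (i.removeNth a) (i.removeNth b),
      f (insertNth i (a i) y)) + ∫ y in box (i.removeNth a) (i.removeNth b),
        f (insertNth i (b i) y)) := by
  have hterms := integrable_finsetSum_measure.1 hf
  rw [boxBoundaryMeasure, integral_finsetSum_measure hterms]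
  refine Finset.sum_congr rfl fun i hi => ?_
  obtain ⟨ha, hb⟩ := integrable_add_measure.1 (hterms i hi)
  rw [integral_add_measure ha hb, (measurableEmbedding_insertNth _ _).integral_map,
    (measurableEmbedding_insertNth _ _).integral_map]

theorem boxBoundaryMeasure_real_univ :
    (boxBoundaryMeasure a b).real univ =
      ∑ i : Fin (n + 1), 2 * volume.real (box (i.removeNth a) (i.removeNth b)) := by
  have hfin (i : Fin (n + 1)) : volume (box (i.removeNth a) (i.removeNth b)) ≠ ∞ := by
    rw [volume_box]
    exact ENNReal.prod_ne_top fun _ _ => ENNReal.ofReal_ne_top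
  simp [boxBoundaryMeasure, measureReal_def, (measurableEmbedding_insertNth _ _).map_apply,
    ENNReal.toReal_sum, ENNReal.toReal_add, hfin, two_mul]

theorem _root_.ConvexOn.setAverage_box_le_average_boxBoundaryMeasure (hab : ∀ i, a i < b i)
    (hf : ConvexOn ℝ (box a b) f) (hfint : IntegrableOn f (box a b))
    (hfb : Integrable f (boxBoundaryMeasure a b)) :
    ⨍ x in box a b, f x ≤ ⨍ x, f x ∂boxBoundaryMeasure a b := by
  have hface := integrable_boxBoundaryMeasure_iff.1 hfb
  set L : Fin (n + 1) → ℝ := fun i => volume.real (box (i.removeNth a) (i.removeNth b))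
  set S : Fin (n + 1) → ℝ := fun i => (∫ y in box (i.removeNth a) (i.removeNth b),
    f (insertNth i (a i) y)) + ∫ y in box (i.removeNth a) (i.removeNth b), f (insertNth i (b i) y)
  have hab' (i : Fin (n + 1)) : i.removeNth a ≤ i.removeNth b := fun k => (hab _).le
  have hL (i : Fin (n + 1)) : 0 < L i := by
    simp only [L, volume_real_box (hab' i)]
    exact Finset.prod_pos fun k _ => sub_pos.2 (hab _)
  have hV (i : Fin (n + 1)) : volume.real (box a b) = (b i - a i) * L i := by
    simp only [L, volume_real_box (hab' i), volume_real_box fun j => (hab j).le,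
      Fin.prod_univ_succAbove _ i, Fin.removeNth]
  have hkey (i : Fin (n + 1)) :
      (∫ x in box a b, f x) * (2 * L i) ≤ volume.real (box a b) * S i :=
    calc (∫ x in box a b, f x) * (2 * L i)
        ≤ (b i - a i) * S i / 2 * (2 * L i) :=
          mul_le_mul_of_nonneg_right
            (hf.setIntegral_box_le_mul_add_div_two hfint (hab i) (hface i).1 (hface i).2)
            (mul_pos two_pos (hL i)).le
      _ = volume.real (box a b) * S i := by rw [hV i]; ring
  have hVpos : 0 < volume.real (box a b) := by
    rw [hV 0]
    exact mul_pos (sub_pos.2 (hab 0)) (hL 0)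
  have hSpos : 0 < ∑ i, 2 * L i := Finset.sum_pos (fun i _ => by simpa using hL i) Finset.univ_nonempty
  rw [setAverage_eq, average_eq, boxBoundaryMeasure_real_univ, integral_boxBoundaryMeasure hfb,
    smul_eq_mul, smul_eq_mul, ← div_eq_inv_mul, ← div_eq_inv_mul, div_le_div_iff₀ hVpos hSpos,
    Finset.mul_sum, Finset.sum_mul]
  exact Finset.sum_le_sum fun i _ => by simpa [mul_comm] using hkey i

end Boundary
end EuclideanSpace

open EuclideanSpace in
/-- Every axis-parallel box in `ℝ^d` is a Jensen domain. -/
theorem box_is_jensen_domain (d : ℕ) (hd : 2 ≤ d) (a b : Fin d → ℝ)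
    (hab : ∀ i, a i < b i)
    (Ω : Set (EuclideanSpace ℝ (Fin d)))
    (hΩ : Ω = {x : EuclideanSpace ℝ (Fin d) | ∀ i, x i ∈ Set.Icc (a i) (b i)})
    (f : EuclideanSpace ℝ (Fin d) → ℝ) (hf : ConvexOn ℝ Ω f)
    (hfint : IntegrableOn f Ω volume)
    (hfbint : IntegrableOn f (frontier Ω) (μH[(d : ℝ) - 1])) :
    (volume Ω).toReal⁻¹ * ∫ x in Ω, f x ≤
      ((μH[(d : ℝ) - 1]) (frontier Ω)).toReal⁻¹ *
        ∫ x in frontier Ω, f x ∂(μH[(d : ℝ) - 1]) := by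
  obtain ⟨n, rfl⟩ : ∃ n, d = n + 1 := ⟨d - 1, by omega⟩
  have hdim : ((n + 1 : ℕ) : ℝ) - 1 = n := by push_cast; ring
  rw [hdim] at hfbint ⊢
  change Ω = box a b at hΩ
  subst hΩ
  obtain ⟨c, hc, hμ⟩ := hausdorffMeasure_restrict_frontier_box hab
  rw [IntegrableOn, hμ] at hfbint
  rw [← measureReal_def, ← measureReal_def, ← smul_eq_mul, ← smul_eq_mul, ← setAverage_eq,
    ← setAverage_eq, hμ, average_smul_measure _ hc]
  exact hf.setAverage_box_le_average_boxBoundaryMeasure hab hfint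
    ((integrable_smul_measure (c := (c : ℝ≥0∞)) (by simpa using hc) ENNReal.coe_ne_top).1 hfbint)
end
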